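/- arXiv:1806.05126 — 2 statements merged into one kernel-verified Lean document; each statement's English description precedes it below -/
import Mathlib

section
/- Let M = (S, A, X, T, i) be a parametric MDP with induced POMDP M', and let f denote the bijection from Hist_X to Hist' given by f(x, s0·a0·⋯·sn) = (s0,x)·a0·⋯·(sn,x). For every pMDP policy π_X of M, the map π_X ∘ f⁻¹ : Hist' → Dist(A) is a POMDP policy of M', i.e., it satisfies (π_X ∘ f⁻¹)(h1) = (π_X ∘ f⁻¹)(h2) for all histories h1, h2 of M' with O(h1) = O(h2). -/
open MeasureTheory ENNReal

namespace PMDPEncoding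

universe u v w

variable {S : Type u} {A : Type v} {X : Type w}

/-- An infinite alternating sequence of state-action pairs
(the `k`-th pair consists of the `k`-th state and the `k`-th action of the run). -/
abbrev RunSeq (S : Type u) (A : Type v) := ℕ → S × A

/-- `ρ` is a run of the MDP with transition function `T`:
all transitions have positive probability. -/
def IsRun (T : S → A → PMF S) (ρ : RunSeq S A) : Prop :=
  ∀ k, 0 < T (ρ k).1 (ρ k).2 (ρ (k + 1)).1

/-- A history: a finite list of state-action pairs followed by a final state. -/
abbrev Hist (S : Type u) (A : Type v) := List (S × A) × S

/-- The first state of a history. -/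
def Hist.first (h : Hist S A) : S :=
  match h.1 with
  | [] => h.2
  | p :: _ => p.1

/-- Auxiliary for `IsHist`: validity of the list part of a history with final state `t`. -/
def IsHistL (T : S → A → PMF S) : List (S × A) → S → Prop
  | [], _ => True
  | (s, a) :: rest, t => 0 < T s a (Hist.first (rest, t)) ∧ IsHistL T rest t

/-- `h` is a history (finite prefix of a run) of the MDP with transition function `T`. -/
def IsHist (T : S → A → PMF S) (h : Hist S A) : Prop := IsHistL T h.1 h.2

/-- The set of runs of the MDP with transition function `T`. -/
def Runs (T : S → A → PMF S) := {ρ : RunSeq S A // IsRun T ρ}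

/-- The set of (raw) sequences having the history `h` as a prefix. -/
def ConeSeq (h : Hist S A) : Set (RunSeq S A) :=
  {ρ | (∀ k, (hk : k < h.1.length) → ρ k = h.1[k]'hk) ∧ (ρ h.1.length).1 = h.2}

/-- The cone of a history: the set of runs with prefix `h`. -/
def Cone (T : S → A → PMF S) (h : Hist S A) : Set (Runs T) :=
  {ρ | ρ.1 ∈ ConeSeq h}

/-- The σ-algebra on runs generated by the cones of histories. -/
instance conesAlg (T : S → A → PMF S) : MeasurableSpace (Runs T) :=
  MeasurableSpace.generateFrom {C | ∃ h : Hist S A, IsHist T h ∧ C = Cone T h}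

/-- Valid histories of an MDP, as a subtype. -/
def HistOf (T : S → A → PMF S) := {h : Hist S A // IsHist T h}

/-- Auxiliary function for the probability of a cone:
`pre` is the prefix of the history processed so far. -/
noncomputable def coneProbAux (T : S → A → PMF S) (π : Hist S A → PMF A) :
    List (S × A) → List (S × A) → S → ℝ≥0∞
  | _, [], _ => 1
  | pre, (s, a) :: rest, t =>
      π (pre, s) a * T s a (Hist.first (rest, t)) *
        coneProbAux T π (pre ++ [(s, a)]) rest t

/-- The probability `i(s₀) · ∏_{k<n} π(s₀a₀…s_k)(a_k) · T(s_k,a_k)(s_{k+1})` that the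
induced measure of policy `π` and initial distribution `i` assigns to the cone of a history. -/
noncomputable def coneProb (T : S → A → PMF S) (i : PMF S) (π : Hist S A → PMF A)
    (h : Hist S A) : ℝ≥0∞ :=
  i h.first * coneProbAux T π [] h.1 h.2

/-- The evaluated transition function `T_x` of a pMDP at parameter point `x`. -/
def evalT (T : S → A → X → PMF S) (x : X) : S → A → PMF S := fun s a => T s a x

/-- Runs of a pMDP: pairs `(x, ρ)` of a parameter value `x` and a run `ρ` of `M(x)`. -/
def RunsX (T : S → A → X → PMF S) := {q : X × RunSeq S A // IsRun (evalT T q.1) q.2}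

/-- Valid histories of a pMDP: pairs `(x, h)` with `h` a history of `M(x)`. -/
def HistX (T : S → A → X → PMF S) := {q : X × Hist S A // IsHist (evalT T q.1) q.2}

/-- The generator set `{x} × Cone(h)` of the σ-algebra on the runs of a pMDP. -/
def ConeX (T : S → A → X → PMF S) (x : X) (h : Hist S A) : Set (RunsX T) :=
  {q | q.1.1 = x ∧ q.1.2 ∈ ConeSeq h}

/-- The σ-algebra on the runs of a pMDP generated by the sets `{x} × Cone(h)`. -/
instance conesXAlg (T : S → A → X → PMF S) : MeasurableSpace (RunsX T) :=
  MeasurableSpace.generateFrom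
    {C | ∃ (x : X) (h : Hist S A), IsHist (evalT T x) h ∧ C = ConeX T x h}

/-- The transition function `T'` of the induced POMDP of a pMDP:
`T'((s,x),a)(s',x') = T(s,a)(x)(s') · δ_x(x')`. -/
noncomputable def indT (T : S → A → X → PMF S) : S × X → A → PMF (S × X) :=
  fun sx a => (T sx.1 a sx.2).map fun s' => (s', sx.2)

/-- The observation function of the induced POMDP: `O(s,x) = s`. -/
def obs : S × X → S := Prod.fst

/-- The observation map extended to histories of the induced POMDP. -/
def obsHist : Hist (S × X) A → Hist S A :=
  fun h => (h.1.map fun p => (p.1.1, p.2), h.2.1)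

/-- The map `f` on raw sequences: `f(x, s₀·a₀·s₁·⋯) = (s₀,x)·a₀·(s₁,x)·⋯`. -/
def fSeq (x : X) (ρ : RunSeq S A) : RunSeq (S × X) A :=
  fun k => (((ρ k).1, x), (ρ k).2)

theorem indT_pos {T : S → A → X → PMF S} {s s' : S} {a : A} {x : X}
    (h : 0 < T s a x s') : 0 < indT T (s, x) a (s', x) := by
  have hmem : (s', x) ∈ ((T s a x).map fun u => (u, x)).support := by
    rw [PMF.support_map]
    exact ⟨s', (PMF.mem_support_iff _ _).2 h.ne', rfl⟩
  exact pos_iff_ne_zero.mpr ((PMF.mem_support_iff _ _).1 hmem)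

/-- The map `f : Runs_X → Runs'` from the runs of a pMDP to the runs of its induced POMDP. -/
def fRun (T : S → A → X → PMF S) (q : RunsX T) : Runs (indT T) :=
  ⟨fSeq q.1.1 q.1.2, fun k => indT_pos (q.2 k)⟩

/-- The map `f` on raw histories: `f(x, s₀·a₀·⋯·s_n) = (s₀,x)·a₀·⋯·(s_n,x)`. -/
def fHistSeq (x : X) (h : Hist S A) : Hist (S × X) A :=
  (h.1.map fun p => ((p.1, x), p.2), (h.2, x))

theorem isHist_fHistSeq (T : S → A → X → PMF S) (x : X) :
    ∀ (l : List (S × A)) (t : S), IsHist (evalT T x) (l, t) →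
      IsHist (indT T) (fHistSeq x (l, t))
  | [], _, _ => trivial
  | (s, a) :: rest, t, hv => by
      obtain ⟨h1, h2⟩ := hv
      have hrec := isHist_fHistSeq T x rest t h2
      refine ⟨?_, hrec⟩
      show 0 < indT T (s, x) a (Hist.first ((rest.map fun p => ((p.1, x), p.2)), (t, x)))
      have hfirst : Hist.first ((rest.map fun p => ((p.1, x), p.2) : List ((S × X) × A)), (t, x)) =
          (Hist.first (rest, t), x) := by
        cases rest <;> rfl
      rw [hfirst]
      exact indT_pos h1

/-- The map `f : Hist_X → Hist'` from the histories of a pMDP to the histories of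
its induced POMDP. -/
def fHistX (T : S → A → X → PMF S) (q : HistX T) : HistOf (indT T) :=
  ⟨fHistSeq q.1.1 q.1.2, isHist_fHistSeq T q.1.1 q.1.2.1 q.1.2.2 q.2⟩

/-- Some run of an MDP: start anywhere, always pick a fixed action, and follow the
support of the transition distributions. -/
noncomputable def someRunSeq (T : S → A → PMF S) (sa : S × A) (a : A) : RunSeq S A :=
  fun k => Nat.rec sa (fun _ ih => ((PMF.support_nonempty (T ih.1 ih.2)).some, a)) k

theorem someRunSeq_isRun (T : S → A → PMF S) (sa : S × A) (a : A) :
    IsRun T (someRunSeq T sa a) := by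
  intro k
  exact pos_iff_ne_zero.mpr <| (PMF.mem_support_iff _ _).1 <|
    (PMF.support_nonempty (T (someRunSeq T sa a k).1 (someRunSeq T sa a k).2)).some_mem

instance instNonemptyRuns [Nonempty S] [Nonempty A] (T : S → A → PMF S) :
    Nonempty (Runs T) :=
  ⟨⟨someRunSeq T (Classical.arbitrary S, Classical.arbitrary A) (Classical.arbitrary A),
    someRunSeq_isRun _ _ _⟩⟩

instance instNonemptyRunsX [Nonempty S] [Nonempty A] [Nonempty X] (T : S → A → X → PMF S) :
    Nonempty (RunsX T) :=
  ⟨⟨(Classical.arbitrary X,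
      someRunSeq (evalT T (Classical.arbitrary X))
        (Classical.arbitrary S, Classical.arbitrary A) (Classical.arbitrary A)),
    someRunSeq_isRun _ _ _⟩⟩

instance instNonemptyHistX [Nonempty S] [Nonempty X] (T : S → A → X → PMF S) :
    Nonempty (HistX T) :=
  ⟨⟨(Classical.arbitrary X, ([], Classical.arbitrary S)), trivial⟩⟩

instance instNonemptyHistOf [Nonempty S] (T : S → A → PMF S) :
    Nonempty (HistOf T) :=
  ⟨⟨([], Classical.arbitrary S), trivial⟩⟩

theorem map_aux (x : X) : ∀ l : List (S × A),
    (l.map fun p => ((p.1, x), p.2)).map (fun p => (p.1.1, p.2)) = l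
  | [] => rfl
  | p :: rest => by rw [List.map_cons, List.map_cons, map_aux x rest]

theorem obsHist_fHistSeq (x : X) (h : Hist S A) : obsHist (fHistSeq x h) = h := by
  obtain ⟨l, t⟩ := h
  exact Prod.ext_iff.2 ⟨map_aux x l, rfl⟩

theorem first_fHistSeq (x : X) (h : Hist S A) :
    Hist.first (fHistSeq x h) = (Hist.first h, x) := by
  obtain ⟨l, t⟩ := h
  cases l <;> rfl

theorem fHist_surj_aux (T : S → A → X → PMF S) :
    ∀ (l : List ((S × X) × A)) (t : S × X), IsHist (indT T) (l, t) →
      fHistSeq t.2 ((l.map fun p => (p.1.1, p.2)), t.1) = (l, t) ∧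
        IsHist (evalT T t.2) ((l.map fun p => (p.1.1, p.2)), t.1)
  | [], t, _ => ⟨rfl, trivial⟩
  | ((s, xs), a) :: rest, t, hv => by
      obtain ⟨h1, h2⟩ := hv
      obtain ⟨ih1, ih2⟩ := fHist_surj_aux T rest t h2
      -- analyze the positive transition
      have hmem : Hist.first (rest, t) ∈ (indT T (s, xs) a).support :=
        (PMF.mem_support_iff _ _).2 h1.ne'
      rw [indT, PMF.support_map] at hmem
      obtain ⟨s', hs', hfe⟩ := hmem
      -- x-component of Hist.first (rest, t) is t.2
      have hfirst : Hist.first (rest, t) =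
          (Hist.first ((rest.map fun p => (p.1.1, p.2)), t.1), t.2) := by
        conv_lhs => rw [← ih1]
        exact first_fHistSeq t.2 _
      have hpair : (s', xs) = (Hist.first ((rest.map fun p => (p.1.1, p.2)), t.1), t.2) :=
        hfe.trans hfirst
      have hxs : xs = t.2 := (Prod.ext_iff.1 hpair).2
      have hs'eq : s' = Hist.first ((rest.map fun p => (p.1.1, p.2)), t.1) :=
        (Prod.ext_iff.1 hpair).1
      subst hxs
      constructor
      · show (((s, t.2), a) :: _, (t.1, t.2)) = _
        rw [Prod.ext_iff]
        constructor
        · show ((s, t.2), a) :: (fHistSeq t.2 ((rest.map fun p => (p.1.1, p.2)), t.1)).1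
            = ((s, t.2), a) :: rest
          rw [(Prod.ext_iff.1 ih1).1]
        · exact (Prod.ext_iff.1 ih1).2
      · refine ⟨?_, ih2⟩
        show 0 < evalT T t.2 s a (Hist.first ((rest.map fun p => (p.1.1, p.2)), t.1))
        rw [← hs'eq]
        exact pos_iff_ne_zero.mpr ((PMF.mem_support_iff _ _).1 hs')

theorem fHistX_surjective [Nonempty S] [Nonempty X] (T : S → A → X → PMF S)
    (h : HistOf (indT T)) : ∃ q : HistX T, fHistX T q = h := by
  obtain ⟨⟨l, t⟩, hvalid⟩ := h
  obtain ⟨he, hh⟩ := fHist_surj_aux T l t hvalid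
  refine ⟨⟨(t.2, ((l.map fun p => (p.1.1, p.2)), t.1)), hh⟩, ?_⟩
  exact Subtype.ext he

/-- For every pMDP policy `π_X` of `M` (a parameter-independent map on
`Hist_X`), the map `π_X ∘ f⁻¹ : Hist' → Dist(A)` is a POMDP policy of the induced POMDP
`M'`: it assigns the same distribution to histories with equal observation sequences. -/
theorem pmdp_policy_to_pomdp_policy [Nonempty S] [Nonempty X]
    (T : S → A → X → PMF S) (πX : HistX T → PMF A)
    (hπX : ∀ q q' : HistX T, q.1.2 = q'.1.2 → πX q = πX q') :
    ∀ h1 h2 : HistOf (indT T), obsHist h1.1 = obsHist h2.1 →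
      (πX ∘ Function.invFun (fHistX T)) h1 = (πX ∘ Function.invFun (fHistX T)) h2 := by
  intro h1 h2 hobs
  have he1 : fHistX T (Function.invFun (fHistX T) h1) = h1 :=
    Function.invFun_eq (fHistX_surjective T h1)
  have he2 : fHistX T (Function.invFun (fHistX T) h2) = h2 :=
    Function.invFun_eq (fHistX_surjective T h2)
  apply hπX
  have k1 : obsHist h1.1 = (Function.invFun (fHistX T) h1).1.2 := by
    conv_lhs => rw [← he1]
    exact obsHist_fHistSeq _ _
  have k2 : obsHist h2.1 = (Function.invFun (fHistX T) h2).1.2 := by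
    conv_lhs => rw [← he2]
    exact obsHist_fHistSeq _ _
  rw [← k1, ← k2, hobs]

end PMDPEncoding
end

section
/- Let M = (S, A, X, T, i) be a parametric MDP with induced POMDP M', let p ∈ Dist(X) be a parameter distribution, let π_X be a pMDP policy of M, let π' = Φ(π_X) = π_X ∘ f⁻¹, and let i' ∈ Dist(S×X) be given by i'(s,x) = i(s)·p(x). Then P^M_{π_X,i,p} = P^{M'}_{π',i'} ∘ f, i.e., the pushforward of the measure P^M_{π_X,i,p} along the measurable isomorphism f : (Runs_X, Cones_X) → (Runs', Cones') equals the measure P^{M'}_{π',i'}. -/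
/-!
Both measures are probability measures on `Runs'`, and the cones of histories form a π-system
generating its σ-algebra, so it suffices to compare them on cones. The parameter never changes
along a history of `M'`, so every such history is `f(x, h)` for a history `h` of `M(x)`, and the
preimage of its cone under `f` is `{x} × Cone(h)`. Since `T'` copies `T_x`, `π'` agrees with
`π_X` on images under `f`, and `i'(s, x) = i(s) p(x)`, the cone probability of `f(x, h)` in `M'`
is `p(x)` times that of `h` in `M(x)`, which is the mass `P_{π_X,i,p}` gives to `{x} × Cone(h)`.
-/

open MeasureTheory ENNReal

namespace PMDPEncoding

universe u v w

variable {S : Type u} {A : Type v} {X : Type w}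

lemma indT_apply (T : S → A → X → PMF S) (s s' : S) (a : A) (x : X) :
    indT T (s, x) a (s', x) = T s a x s' := by
  rw [indT, PMF.map_apply, tsum_eq_single s']
  · simp
  · intro b hb
    simp [Prod.ext_iff, Ne.symm hb]

lemma snd_eq_of_indT_pos {T : S → A → X → PMF S} {s : S} {a : A} {x : X} {sx' : S × X}
    (h : 0 < indT T (s, x) a sx') : sx'.2 = x := by
  have hmem : sx' ∈ ((T s a x).map fun u => (u, x)).support :=
    (PMF.mem_support_iff _ _).2 h.ne'
  rw [PMF.support_map] at hmem
  obtain ⟨u, -, rfl⟩ := hmem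
  rfl

lemma first_fHistSeq_s7 (x : X) (l : List (S × A)) (t : S) :
    Hist.first ((l.map fun p => ((p.1, x), p.2) : List ((S × X) × A)), (t, x)) =
      (Hist.first (l, t), x) := by
  cases l <;> rfl

lemma isHistL_of_append (T : S → A → PMF S) :
    ∀ (pre l : List (S × A)) (t : S), IsHistL T (pre ++ l) t →
      IsHistL T pre (Hist.first (l, t))
  | [], _, _, _ => trivial
  | (s, a) :: pre', l, t, ⟨h1, h2⟩ => by
    refine ⟨?_, isHistL_of_append T pre' l t h2⟩
    have heq : Hist.first (pre' ++ l, t) = Hist.first (pre', Hist.first (l, t)) := by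
      cases pre' <;> cases l <;> rfl
    rwa [List.append_eq, heq] at h1

lemma fHistSeq_obsHist (T : S → A → X → PMF S) :
    ∀ (l' : List ((S × X) × A)) (t' : S × X), IsHist (indT T) (l', t') →
      fHistSeq t'.2 (obsHist (l', t')) = (l', t') ∧ IsHist (evalT T t'.2) (obsHist (l', t'))
  | [], _, _ => ⟨rfl, trivial⟩
  | ((s, x), a) :: rest, t', ⟨hpos, hrest⟩ => by
    obtain ⟨hf, hv⟩ := fHistSeq_obsHist T rest t' hrest
    have hfirst : Hist.first (rest, t') = (Hist.first (obsHist (rest, t')), t'.2) := by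
      conv_lhs => rw [← hf]
      exact first_fHistSeq_s7 _ _ _
    obtain rfl : x = t'.2 := by
      simpa [hfirst] using (snd_eq_of_indT_pos hpos).symm
    rw [hfirst, indT_apply] at hpos
    refine ⟨?_, hpos, hv⟩
    simp only [fHistSeq, obsHist, List.map_cons, List.map_map] at hf ⊢
    obtain ⟨hl, ht⟩ := Prod.mk.inj hf
    rw [hl, ht]

lemma exists_fHistSeq_eq_of_isHist (T : S → A → X → PMF S) {h' : Hist (S × X) A}
    (hv : IsHist (indT T) h') :
    ∃ (x : X) (h : Hist S A), IsHist (evalT T x) h ∧ fHistSeq x h = h' :=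
  let ⟨hf, hvh⟩ := fHistSeq_obsHist T h'.1 h'.2 hv
  ⟨_, _, hvh, hf⟩

lemma fRun_preimage_cone (T : S → A → X → PMF S) (x : X) (h : Hist S A) :
    fRun T ⁻¹' Cone (indT T) (fHistSeq x h) = ConeX T x h := by
  ext ⟨⟨x', ρ⟩, _⟩
  simp only [Cone, ConeX, ConeSeq, fHistSeq, Set.mem_ofPred_eq, List.length_map,
    List.getElem_map, Prod.ext_iff]
  constructor
  · rintro ⟨hpre, hlast, rfl⟩
    exact ⟨rfl, fun k hk => ⟨(hpre k hk).1.1, (hpre k hk).2⟩, hlast⟩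
  · rintro ⟨rfl, hpre, hlast⟩
    exact ⟨fun k hk => ⟨⟨(hpre k hk).1, rfl⟩, (hpre k hk).2⟩, hlast, rfl⟩

lemma measurable_fRun (T : S → A → X → PMF S) : Measurable (fRun T) := by
  refine measurable_generateFrom ?_
  rintro _ ⟨h', hv', rfl⟩
  obtain ⟨x, h, hv, rfl⟩ := exists_fHistSeq_eq_of_isHist T hv'
  rw [fRun_preimage_cone]
  exact MeasurableSpace.measurableSet_generateFrom ⟨x, h, hv, rfl⟩

lemma coneSeq_subset_of_length_le {h₁ h₂ : Hist S A} (hle : h₁.1.length ≤ h₂.1.length)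
    (hne : (ConeSeq h₁ ∩ ConeSeq h₂).Nonempty) : ConeSeq h₂ ⊆ ConeSeq h₁ := by
  obtain ⟨ρ₀, ⟨hp₁, hs₁⟩, ⟨hp₂, hs₂⟩⟩ := hne
  rintro ρ ⟨hp, hs⟩
  refine ⟨fun k hk => ?_, ?_⟩
  · rw [hp k (hk.trans_le hle), ← hp₂ k (hk.trans_le hle), hp₁ k hk]
  · rcases hle.lt_or_eq with hlt | heq
    · rw [hp _ hlt, ← hp₂ _ hlt, hs₁]
    · rw [heq, hs, ← hs₂, ← heq, hs₁]

lemma isPiSystem_cones (T : S → A → PMF S) :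
    IsPiSystem {C : Set (Runs T) | ∃ h : Hist S A, IsHist T h ∧ C = Cone T h} := by
  rintro _ ⟨h₁, hv₁, rfl⟩ _ ⟨h₂, hv₂, rfl⟩ ⟨ρ, hρ₁, hρ₂⟩
  rcases le_total h₁.1.length h₂.1.length with hle | hle
  · have hsub := coneSeq_subset_of_length_le hle ⟨ρ.1, hρ₁, hρ₂⟩
    exact ⟨h₂, hv₂, Set.inter_eq_right.2 fun _ hσ => hsub hσ⟩
  · have hsub := coneSeq_subset_of_length_le hle ⟨ρ.1, hρ₂, hρ₁⟩
    exact ⟨h₁, hv₁, Set.inter_eq_left.2 fun _ hσ => hsub hσ⟩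

lemma coneProbAux_indT {T : S → A → X → PMF S} {x : X} {π : Hist S A → PMF A}
    {π' : Hist (S × X) A → PMF A}
    (hπ : ∀ h : Hist S A, IsHist (evalT T x) h → π' (fHistSeq x h) = π h) :
    ∀ (l pre : List (S × A)) (t : S), IsHistL (evalT T x) (pre ++ l) t →
      coneProbAux (indT T) π' (pre.map fun p => ((p.1, x), p.2))
          (l.map fun p => ((p.1, x), p.2)) (t, x) =
        coneProbAux (evalT T x) π pre l t
  | [], _, _, _ => rfl
  | (s, a) :: rest, pre, t, hv => by
    have hrest := coneProbAux_indT hπ rest (pre ++ [(s, a)]) t (by simpa using hv)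
    have hpre : π' ((pre.map fun p => ((p.1, x), p.2)), (s, x)) = π (pre, s) :=
      hπ (pre, s) (isHistL_of_append _ pre ((s, a) :: rest) t hv)
    simp only [List.map_cons, coneProbAux]
    rw [first_fHistSeq_s7, indT_apply, hpre, ← hrest, List.map_append]
    rfl

lemma coneProb_indT_fHistSeq {T : S → A → X → PMF S} {x : X} {i : PMF S} {i' : PMF (S × X)}
    {c : ℝ≥0∞} (hi' : ∀ s, i' (s, x) = i s * c) {π : Hist S A → PMF A}
    {π' : Hist (S × X) A → PMF A}
    (hπ : ∀ h : Hist S A, IsHist (evalT T x) h → π' (fHistSeq x h) = π h)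
    {h : Hist S A} (hv : IsHist (evalT T x) h) :
    coneProb (indT T) i' π' (fHistSeq x h) = c * coneProb (evalT T x) i π h := by
  obtain ⟨l, t⟩ := h
  have haux := coneProbAux_indT hπ l [] t hv
  rw [List.map_nil] at haux
  rw [coneProb, coneProb, fHistSeq, first_fHistSeq_s7, hi', haux]
  ring

theorem measure_pushforward_correspondence_general (T : S → A → X → PMF S) (i : PMF S) (p : PMF X)
    (πX : X × Hist S A → PMF A)
    (π' : Hist (S × X) A → PMF A)
    (hPhi : ∀ (x : X) (h : Hist S A), IsHist (evalT T x) h → π' (fHistSeq x h) = πX (x, h))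
    (i' : PMF (S × X)) (hi' : ∀ s x, i' (s, x) = i s * p x)
    (Px : ∀ x : X, Measure (Runs (evalT T x)))
    (hPx : ∀ (x : X) (h : Hist S A), IsHist (evalT T x) h →
      Px x (Cone (evalT T x) h) = coneProb (evalT T x) i (fun h => πX (x, h)) h)
    (μ : Measure (RunsX T)) [IsProbabilityMeasure μ]
    (hμ : ∀ (x : X) (h : Hist S A), IsHist (evalT T x) h →
      μ (ConeX T x h) = p x * Px x (Cone (evalT T x) h))
    (P' : Measure (Runs (indT T))) [IsProbabilityMeasure P']
    (hP' : ∀ h' : Hist (S × X) A, IsHist (indT T) h' →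
      P' (Cone (indT T) h') = coneProb (indT T) i' π' h') :
    μ.map (fRun T) = P' := by
  have hf := measurable_fRun T
  have : IsProbabilityMeasure (μ.map (fRun T)) := Measure.isProbabilityMeasure_map hf.aemeasurable
  refine ext_of_generate_finite _ rfl (isPiSystem_cones _) ?_ (by simp)
  rintro _ ⟨h', hv', rfl⟩
  obtain ⟨x, h, hv, rfl⟩ := exists_fHistSeq_eq_of_isHist T hv'
  have hC : MeasurableSet (Cone (indT T) (fHistSeq x h)) :=
    MeasurableSpace.measurableSet_generateFrom ⟨_, hv', rfl⟩
  rw [Measure.map_apply hf hC, fRun_preimage_cone, hμ x h hv, hPx x h hv, hP' _ hv',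
    coneProb_indT_fHistSeq (fun s => hi' s x) (hPhi x) hv]

/-- Let `p ∈ Dist(X)` be a parameter distribution, `π_X` a pMDP policy of
`M`, `π' = Φ(π_X) = π_X ∘ f⁻¹`, and `i'(s,x) = i(s)·p(x)`. Then
`P^M_{π_X,i,p} = P^{M'}_{π',i'} ∘ f`: the pushforward of `P^M_{π_X,i,p}` along the
measurable isomorphism `f : (Runs_X, Cones_X) → (Runs', Cones')` equals `P^{M'}_{π',i'}`. -/
theorem measure_pushforward_correspondence (T : S → A → X → PMF S) (i : PMF S) (p : PMF X)
    (πX : X × Hist S A → PMF A)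
    (hind : ∀ (x y : X) (h : Hist S A), IsHist (evalT T x) h → IsHist (evalT T y) h →
      πX (x, h) = πX (y, h))
    (π' : Hist (S × X) A → PMF A)
    (hPhi : ∀ (x : X) (h : Hist S A), IsHist (evalT T x) h → π' (fHistSeq x h) = πX (x, h))
    (i' : PMF (S × X)) (hi' : ∀ s x, i' (s, x) = i s * p x)
    (Px : ∀ x : X, Measure (Runs (evalT T x)))
    (hPxProb : ∀ x, IsProbabilityMeasure (Px x))
    (hPx : ∀ (x : X) (h : Hist S A), IsHist (evalT T x) h →
      Px x (Cone (evalT T x) h) = coneProb (evalT T x) i (fun h => πX (x, h)) h)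
    (μ : Measure (RunsX T)) [IsProbabilityMeasure μ]
    (hμ : ∀ (x : X) (h : Hist S A), IsHist (evalT T x) h →
      μ (ConeX T x h) = p x * Px x (Cone (evalT T x) h))
    (P' : Measure (Runs (indT T))) [IsProbabilityMeasure P']
    (hP' : ∀ h' : Hist (S × X) A, IsHist (indT T) h' →
      P' (Cone (indT T) h') = coneProb (indT T) i' π' h') :
    μ.map (fRun T) = P' :=
  measure_pushforward_correspondence_general T i p πX π' hPhi i' hi' Px hPx μ hμ P' hP'

end PMDPEncoding
end
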